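/- Let ρ_1, ρ_2, ρ_3 : ℝ>0 → ℝ≥0 be non-increasing functions such that ρ_2 is an (α_1, β_1)-approximation of ρ_1 and ρ_3 is an (α_2, β_2)-approximation of ρ_2, for parameters α_1, β_1, α_2, β_2 ∈ ℝ≥1. Then ρ_3 is an (α_1·α_2, β_1·β_2)-approximation of ρ_1. -/

import Mathlib

open scoped BigOperators Classical
open MeasureTheory

noncomputable section

/-- A finite matroid on ground set `E`, given by its rank function. -/
structure FinMatroid (α : Type*) [DecidableEq α] where
  E : Finset α
  r : Finset α → ℕ
  rank_le_card : ∀ A : Finset α, r A ≤ A.card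
  rank_mono : ∀ ⦃A B : Finset α⦄, A ⊆ B → r A ≤ r B
  rank_submod : ∀ A B : Finset α, r (A ∪ B) + r (A ∩ B) ≤ r A + r B

variable {α : Type*} [DecidableEq α]

/-- Independence in terms of the rank function. -/
def FinMatroid.Indep (M : FinMatroid α) (I : Finset α) : Prop :=
  I ⊆ M.E ∧ M.r I = I.card

/-- The span (closure) of a set. -/
def FinMatroid.span (M : FinMatroid α) (A : Finset α) : Finset α :=
  M.E.filter fun e => M.r (insert e A) = M.r A

/-- `M.D S lam` : the unique inclusion-wise maximal maximizer of `|U| - lam * r U`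
over `U ⊆ S`, realized as the union of all maximizers. -/
def FinMatroid.D (M : FinMatroid α) (S : Finset α) (lam : ℝ) : Finset α :=
  (S.powerset.filter fun U =>
      ∀ V ∈ S.powerset, (V.card : ℝ) - lam * M.r V ≤ (U.card : ℝ) - lam * M.r U).sup id

/-- The rank-density curve of `M`. -/
def FinMatroid.rdCurve (M : FinMatroid α) : ℝ → ℝ := fun t =>
  sSup {lam : ℝ | 0 ≤ lam ∧ t ≤ (M.r (M.D M.E lam) : ℝ)}

/-- Restriction of a matroid to a subset. -/
def FinMatroid.restrict (M : FinMatroid α) (T : Finset α) : FinMatroid α where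
  E := M.E ∩ T
  r := fun A => M.r (A ∩ T)
  rank_le_card := fun A =>
    (M.rank_le_card _).trans (Finset.card_le_card Finset.inter_subset_left)
  rank_mono := fun A B hAB =>
    M.rank_mono (Finset.inter_subset_inter hAB (Finset.Subset.refl T))
  rank_submod := fun A B => by
    have h1 : (A ∪ B) ∩ T = (A ∩ T) ∪ (B ∩ T) := by ext x; simp only [Finset.mem_inter, Finset.mem_union]; tauto
    have h2 : (A ∩ B) ∩ T = (A ∩ T) ∩ (B ∩ T) := by ext x; simp only [Finset.mem_inter]; tauto
    try simp only []
    rw [h1, h2]; exact M.rank_submod _ _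

/-- `eta n w a` : the expected maximum weight among a uniformly random subset of
`⌊a⌋` of the `n` weights `w`, with value `0` for `a < 1`. -/
def eta (n : ℕ) (w : Fin n → ℝ) (a : ℝ) : ℝ :=
  if a < 1 then 0 else
    (∑ R ∈ Finset.powersetCard ⌊a⌋.toNat (Finset.univ : Finset (Fin n)),
        R.fold max 0 w) /
      ((Finset.powersetCard ⌊a⌋.toNat (Finset.univ : Finset (Fin n))).card : ℝ)

/-- `FF n w ρ = ∫_0^∞ η(ρ(t)) dt`. -/
def FF (n : ℕ) (w : Fin n → ℝ) (ρ : ℝ → ℝ) : ℝ :=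
  ∫ t in Set.Ioi (0 : ℝ), eta n w (ρ t)

/-- The `(a, b)`-downshift of a curve `ρ`. -/
def downshift (ρ : ℝ → ℝ) (a b : ℝ) : ℝ → ℝ := fun t =>
  let φ : ℝ := if t ≤ 1 then ρ a / b else ρ (a * t) / b
  if 0 < φ ∧ φ < 1 then 1 else φ

/-- `ρt` is an `(a,b)`-approximation of `ρ`: it is non-increasing and nonnegative on
`(0,∞)` and squeezed between the `(a,b)`-downshift of `ρ` and `ρ` on `(0,∞)`. -/
def IsApprox (a b : ℝ) (ρ ρt : ℝ → ℝ) : Prop :=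
  AntitoneOn ρt (Set.Ioi 0) ∧ (∀ t, 0 < t → 0 ≤ ρt t) ∧
    ∀ t, 0 < t → downshift ρ a b t ≤ ρt t ∧ ρt t ≤ ρ t

/-- Probability of event `P` for a random subset `S ⊆ N` including each element
independently with probability `1/2`. -/
def prHalf (N : Finset α) (P : Finset α → Prop) : ℝ :=
  ((N.powerset.filter P).card : ℝ) / 2 ^ N.card

def raiseToOne (x : ℝ) : ℝ := if 0 < x ∧ x < 1 then 1 else x

lemma le_raiseToOne (x : ℝ) : x ≤ raiseToOne x := by
  unfold raiseToOne
  split_ifs with h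
  exacts [h.2.le, le_rfl]

lemma raiseToOne_mono : Monotone raiseToOne := by
  intro x y hxy
  unfold raiseToOne
  split_ifs <;> grind

-- Folding both branches into `ρ (a * max t 1)` is what lets two downshifts compose.
lemma downshift_eq_raiseToOne (ρ : ℝ → ℝ) (a b t : ℝ) :
    downshift ρ a b t = raiseToOne (ρ (a * max t 1) / b) := by
  unfold downshift raiseToOne
  rcases le_or_gt t 1 with ht | ht
  · simp only [if_pos ht, max_eq_right ht, mul_one]
  · simp only [if_neg ht.not_ge, max_eq_left ht.le]

lemma div_le_downshift (ρ : ℝ → ℝ) (a b t : ℝ) :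
    ρ (a * max t 1) / b ≤ downshift ρ a b t :=
  downshift_eq_raiseToOne ρ a b t ▸ le_raiseToOne _

lemma IsApprox.div_le_of_one_le {a b : ℝ} {ρ ρt : ℝ → ℝ} (h : IsApprox a b ρ ρt)
    {s : ℝ} (hs : 1 ≤ s) : ρ (a * s) / b ≤ ρt s := by
  have hlow := div_le_downshift ρ a b s
  rw [max_eq_left hs] at hlow
  exact hlow.trans (h.2.2 s (zero_lt_one.trans_le hs)).1

lemma IsApprox.downshift_mul_le {a1 b1 a2 b2 : ℝ} {ρ1 ρ2 : ℝ → ℝ} (h : IsApprox a1 b1 ρ1 ρ2)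
    (ha2 : 1 ≤ a2) (hb2 : 0 ≤ b2) (t : ℝ) :
    downshift ρ1 (a1 * a2) (b1 * b2) t ≤ downshift ρ2 a2 b2 t := by
  rw [downshift_eq_raiseToOne, downshift_eq_raiseToOne, mul_assoc, ← div_div]
  have hs : 1 ≤ a2 * max t 1 := one_le_mul_of_one_le_of_one_le ha2 (le_max_right t 1)
  exact raiseToOne_mono (div_le_div_of_nonneg_right (h.div_le_of_one_le hs) hb2)

theorem statement5_general (ρ1 ρ2 ρ3 : ℝ → ℝ)
    (a1 b1 a2 b2 : ℝ) (ha2 : 1 ≤ a2) (hb2 : 1 ≤ b2)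
    (h12 : IsApprox a1 b1 ρ1 ρ2) (h23 : IsApprox a2 b2 ρ2 ρ3) :
    IsApprox (a1 * a2) (b1 * b2) ρ1 ρ3 := by
  obtain ⟨h3anti, h3nonneg, h3squeeze⟩ := h23
  refine ⟨h3anti, h3nonneg, fun t ht => ⟨?_, (h3squeeze t ht).2.trans (h12.2.2 t ht).2⟩⟩
  exact (h12.downshift_mul_le ha2 (zero_le_one.trans hb2) t).trans (h3squeeze t ht).1

theorem statement5 (ρ1 ρ2 ρ3 : ℝ → ℝ)
    (h1anti : AntitoneOn ρ1 (Set.Ioi 0)) (h1nonneg : ∀ t, 0 < t → 0 ≤ ρ1 t)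
    (a1 b1 a2 b2 : ℝ) (ha1 : 1 ≤ a1) (hb1 : 1 ≤ b1) (ha2 : 1 ≤ a2) (hb2 : 1 ≤ b2)
    (h12 : IsApprox a1 b1 ρ1 ρ2) (h23 : IsApprox a2 b2 ρ2 ρ3) :
    IsApprox (a1 * a2) (b1 * b2) ρ1 ρ3 :=
  statement5_general ρ1 ρ2 ρ3 a1 b1 a2 b2 ha2 hb2 h12 h23

end
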